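/- Differentiating the formal power series identity ∑_{k≥n} C(k,n) x^k = x^n/(1-x)^{n+1} once with respect to an auxiliary parameter, one obtains: ∑_{k≥1}∑_{l≥1}∑_{n=1}^{min(k,l)} n·C(k,n)·C(l,n)·x₁^k·x₂^l·x₃^{n-1} = x₁x₂ / ((1-x₁)(1-x₂) - x₁x₂x₃)² as formal power series. -/

import Mathlib

/-!
The series `F = ∑ C(k,n) C(l,n) x₁^k x₂^l x₃^n` is the inverse of
`D = (1 - x₁)(1 - x₂) - x₁x₂x₃`: comparing coefficients in `F D = 1` is Pascal's rule, applied
once in `k` and once in `l`. The left-hand side is `∂F/∂x₃`, and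
`∂(D⁻¹)/∂x₃ = -D⁻² ∂D/∂x₃ = x₁x₂ D⁻²`.
-/

open MvPowerSeries

/-- The formal power series
`∑_{k≥1}∑_{l≥1}∑_{n=1}^{min(k,l)} n·C(k,n)·C(l,n)·x₁^k·x₂^l·x₃^{n-1}`
in variables `x₁ = X 0`, `x₂ = X 1`, `x₃ = X 2` over `ℚ`: the coefficient of
`x₁^k x₂^l x₃^j` is `(j+1)·C(k,j+1)·C(l,j+1)` when `k,l ≥ 1` and `j+1 ≤ min(k,l)`. -/
noncomputable def diffBinomialSeries : MvPowerSeries (Fin 3) ℚ :=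
  fun m =>
    if 1 ≤ m 0 ∧ 1 ≤ m 1 ∧ m 2 + 1 ≤ min (m 0) (m 1) then
      ((m 2 + 1 : ℚ)) * ((m 0).choose (m 2 + 1)) * ((m 1).choose (m 2 + 1))
    else 0

open Finsupp

namespace MvPowerSeries

variable {R : Type*} [CommRing R]

noncomputable def binomialProductSeries : MvPowerSeries (Fin 3) R :=
  fun m => ((m 0).choose (m 2) * (m 1).choose (m 2) : ℕ)

noncomputable def binomialProductDenom : MvPowerSeries (Fin 3) R :=
  (1 - X 0) * (1 - X 1) - X 0 * X 1 * X 2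

theorem constantCoeff_binomialProductDenom :
    constantCoeff (binomialProductDenom : MvPowerSeries (Fin 3) R) = 1 := by
  simp [binomialProductDenom]

theorem pderiv_binomialProductDenom :
    pderiv R 2 (binomialProductDenom : MvPowerSeries (Fin 3) R) = -(X 0 * X 1) := by
  simp [binomialProductDenom, Derivation.leibniz]

theorem binomialProductSeries_mul_binomialProductDenom :
    (binomialProductSeries * binomialProductDenom : MvPowerSeries (Fin 3) R) = 1 := by
  ext m
  rw [coeff_one]
  simp only [binomialProductDenom, mul_sub, sub_mul, mul_one, one_mul, X_def,
    monomial_mul_monomial, map_sub, coeff_mul_monomial]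
  simp only [coeff_apply, binomialProductSeries, Nat.cast_mul, le_def, Fin.forall_fin_succ,
    Finsupp.ext_iff, coe_tsub, coe_add, coe_zero, Pi.sub_apply, Pi.add_apply, Pi.zero_apply,
    single_apply, Fin.reduceEq, Fin.succ_zero_eq_one, Fin.succ_one_eq_two, if_true, if_false,
    IsEmpty.forall_iff, zero_le, tsub_zero, add_zero, zero_add, and_true, true_and]
  generalize m 0 = k, m 1 = l, m 2 = n
  cases k <;> cases l <;> cases n <;> simp [Nat.choose_succ_succ]
  -- Pascal twice: `(C(k+1,n+1) - C(k,n+1)) (C(l+1,n+1) - C(l,n+1)) = C(k,n) C(l,n)`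
  ring

theorem binomialProductSeries_eq_inv {K : Type*} [Field K] :
    (binomialProductSeries : MvPowerSeries (Fin 3) K) = binomialProductDenom⁻¹ :=
  (MvPowerSeries.eq_inv_iff_mul_eq_one (by simp [constantCoeff_binomialProductDenom])).2
    binomialProductSeries_mul_binomialProductDenom

end MvPowerSeries

theorem coeff_diffBinomialSeries (m : Fin 3 →₀ ℕ) :
    coeff m diffBinomialSeries =
      ((m 0).choose (m 2 + 1) * (m 1).choose (m 2 + 1) : ℕ) * (m 2 + 1 : ℚ) := by
  rw [coeff_apply, diffBinomialSeries]
  split_ifs with h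
  · push_cast; ring
  · rcases lt_or_ge (m 0) (m 2 + 1) with h0 | h0
    · simp [Nat.choose_eq_zero_of_lt h0]
    · simp [Nat.choose_eq_zero_of_lt (show m 1 < m 2 + 1 by omega)]

theorem pderiv_binomialProductSeries :
    pderiv ℚ 2 binomialProductSeries = diffBinomialSeries := by
  ext m
  rw [coeff_pderiv, coeff_diffBinomialSeries]
  simp [coeff_apply, binomialProductSeries]

/-- `∑_{k≥1}∑_{l≥1}∑_{n=1}^{min(k,l)} n C(k,n) C(l,n) x₁^k x₂^l x₃^{n-1}
      = x₁x₂ / ((1-x₁)(1-x₂) - x₁x₂x₃)²` as formal power series. -/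
theorem statement3 :
    diffBinomialSeries =
      MvPowerSeries.X (0 : Fin 3) * MvPowerSeries.X 1 *
        ((((1 - MvPowerSeries.X (0 : Fin 3)) * (1 - MvPowerSeries.X 1)) -
          MvPowerSeries.X 0 * MvPowerSeries.X 1 * MvPowerSeries.X 2)⁻¹) ^ 2 := by
  calc diffBinomialSeries = pderiv ℚ 2 binomialProductSeries := pderiv_binomialProductSeries.symm
    _ = pderiv ℚ 2 binomialProductDenom⁻¹ := by rw [binomialProductSeries_eq_inv]
    _ = X 0 * X 1 * (binomialProductDenom⁻¹) ^ 2 := by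
      rw [pderiv_inv', pderiv_binomialProductDenom]; ring
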